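/- arXiv:2402.02259 — 3 statements merged into one kernel-verified Lean document; each statement's English description precedes it below -/
import Mathlib

section
/- Let X be a subgaussian random variable and let A(t) = t²/2 − log E[e^{tX}]. If A(t) ≥ 0 for all t ∈ ℝ, then A satisfies the differential inequality A'(h)² ≤ 2 A(h) for all h ∈ ℝ. -/
open MeasureTheory ProbabilityTheory Filter Real

open Set

/-!
The cumulant generating function `K = log mgf` is convex: its second derivative is the variance
of `X` under the exponentially tilted law. Hence `K` lies above its tangent at `h`, and evaluating
that tangent at `s = K'(h)`, where `K s ≤ s²/2` because `A ≥ 0`, gives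
`K h ≤ h K'(h) - K'(h)²/2`, that is `2 A(h) ≥ (h - K'(h))² = A'(h)²`.
-/

lemma ConvexOn.add_deriv_mul_sub_le {f : ℝ → ℝ} (hf : ConvexOn ℝ univ f) {x : ℝ}
    (hd : DifferentiableAt ℝ f x) (y : ℝ) : f x + deriv f x * (y - x) ≤ f y := by
  rcases lt_trichotomy x y with hxy | rfl | hyx
  · have h := hf.deriv_le_slope (mem_univ x) (mem_univ y) hxy hd
    rw [slope_def_field, le_div_iff₀ (sub_pos.2 hxy)] at h
    linarith
  · simp
  · have h := hf.slope_le_deriv (mem_univ y) (mem_univ x) hyx hd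
    rw [slope_def_field, div_le_iff₀ (sub_pos.2 hyx)] at h
    linarith

lemma sq_sub_deriv_le_of_convexOn_of_le_sq_div_two {K : ℝ → ℝ} (hK : ConvexOn ℝ univ K)
    (hKd : Differentiable ℝ K) (hle : ∀ t, K t ≤ t ^ 2 / 2) (x : ℝ) :
    (x - deriv K x) ^ 2 ≤ 2 * (x ^ 2 / 2 - K x) := by
  have := hK.add_deriv_mul_sub_le (hKd x) (deriv K x)
  nlinarith [hle (deriv K x)]

namespace ProbabilityTheory

variable {Ω : Type*} {m : MeasurableSpace Ω} {μ : Measure Ω} {X : Ω → ℝ}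

lemma integrable_exp_mul_of_integrable_exp_mul_sq {c : ℝ} (hc : 0 < c) (hX : AEMeasurable X μ)
    (hsub : Integrable (fun ω => exp (c * X ω ^ 2)) μ) (t : ℝ) :
    Integrable (fun ω => exp (t * X ω)) μ := by
  refine (hsub.const_mul (exp (t ^ 2 / (4 * c)))).mono'
    (measurable_exp.comp_aemeasurable (hX.const_mul t)).aestronglyMeasurable
    (ae_of_all _ fun ω => ?_)
  rw [norm_of_nonneg (exp_pos _).le, ← exp_add, exp_le_exp, div_add' _ _ _ (by positivity),
    le_div_iff₀ (by positivity)]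
  nlinarith [sq_nonneg (t - 2 * c * X ω)]

lemma differentiable_cgf (h : ∀ t, Integrable (fun ω => exp (t * X ω)) μ) :
    Differentiable ℝ (cgf X μ) := fun t =>
  (analyticAt_cgf (by simp [integrableExpSet, h])).differentiableAt

lemma convexOn_cgf (h : ∀ t, Integrable (fun ω => exp (t * X ω)) μ) :
    ConvexOn ℝ univ (cgf X μ) := by
  have hint : interior (integrableExpSet X μ) = univ := by simp [integrableExpSet, h]
  refine convexOn_univ_of_deriv2_nonneg (differentiable_cgf h) (fun t => ?_) (fun t => ?_)
  · exact (analyticOnNhd_cgf.deriv t (hint ▸ mem_univ t)).differentiableAt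
  · rw [← iteratedDeriv_eq_iterate, ← variance_tilted_mul (hint ▸ mem_univ t)]
    exact variance_nonneg _ _

end ProbabilityTheory

theorem renyi_clt_stmt_7_general
    {Ω : Type*} [MeasurableSpace Ω] (μ : Measure Ω)
    (X : Ω → ℝ) (hX : Measurable X)
    (hsub : ∃ c > 0, Integrable (fun ω => Real.exp (c * (X ω) ^ 2)) μ)
    (A : ℝ → ℝ) (hA : A = fun t => t ^ 2 / 2 - Real.log (mgf X μ t))
    (hA0 : ∀ t : ℝ, 0 ≤ A t) :
    ∀ h : ℝ, (deriv A h) ^ 2 ≤ 2 * A h := by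
  obtain ⟨c, hc, hc_int⟩ := hsub
  have hexp := integrable_exp_mul_of_integrable_exp_mul_sq hc hX.aemeasurable hc_int
  have hA_eq : A = fun t => t ^ 2 / 2 - cgf X μ t := hA
  have hle : ∀ t, cgf X μ t ≤ t ^ 2 / 2 := fun t => by linarith [hA_eq ▸ hA0 t]
  intro h
  have hderiv : deriv A h = h - deriv (cgf X μ) h := by
    rw [hA_eq, deriv_fun_sub (by fun_prop) (differentiable_cgf hexp h)]
    simp
  rw [hderiv, hA_eq]
  exact sq_sub_deriv_le_of_convexOn_of_le_sq_div_two (convexOn_cgf hexp) (differentiable_cgf hexp)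
    hle h

/-- If `X` is subgaussian and `A(t) = t²/2 − log E[e^{tX}]` is nonnegative
everywhere, then `A'(h)² ≤ 2 A(h)` for all `h`. -/
theorem renyi_clt_stmt_7
    {Ω : Type*} [MeasurableSpace Ω] (μ : Measure Ω) [IsProbabilityMeasure μ]
    (X : Ω → ℝ) (hX : Measurable X)
    (hsub : ∃ c > 0, Integrable (fun ω => Real.exp (c * (X ω) ^ 2)) μ)
    (A : ℝ → ℝ) (hA : A = fun t => t ^ 2 / 2 - Real.log (mgf X μ t))
    (hA0 : ∀ t : ℝ, 0 ≤ A t) :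
    ∀ h : ℝ, (deriv A h) ^ 2 ≤ 2 * A h :=
  renyi_clt_stmt_7_general μ X hX hsub A hA hA0
end

section
/- Let X be a random variable with E[X] = 0, Var(X) = 1, whose density p satisfies T_∞(p‖φ) < ∞, and which satisfies the separation condition: for every t₀ > 0, sup_{|t| ≥ t₀} e^{−t²/2} E[e^{tX}] < 1. Then for every τ₀ > 0 there exist constants A > 0 and δ ∈ (0,1) such that for every n ≥ 1, the density p_n of Z_n satisfies p_n(x) ≤ A δⁿ φ(x) for almost every x with |x| ≥ τ₀ √n. -/
open MeasureTheory ProbabilityTheory Filter Real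

/-- The standard normal density on `ℝ`. -/
noncomputable def stdGauss (x : ℝ) : ℝ := (Real.sqrt (2 * Real.pi))⁻¹ * Real.exp (-x ^ 2 / 2)

/-- `p` is a (Lebesgue) density of the random variable `X` defined on `(Ω, μ)`. -/
def HasDensityOn {Ω : Type*} [MeasurableSpace Ω] (μ : Measure Ω) (X : Ω → ℝ) (p : ℝ → ℝ) : Prop :=
  Measurable X ∧ Measurable p ∧ (∀ x, 0 ≤ p x) ∧
    Measure.map X μ = volume.withDensity (fun x => ENNReal.ofReal (p x))

/-- The Tsallis distance of infinite order `T_∞(p‖φ) = ess sup_x (p(x) − φ(x))/φ(x)`,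
with values in `[0, ∞]`. -/
noncomputable def Tinf (p : ℝ → ℝ) : ENNReal :=
  essSup (fun x => ENNReal.ofReal ((p x - stdGauss x) / stdGauss x)) volume

/-- The Rényi divergence of infinite order `D_∞(p‖φ) = ess sup_x log (p(x)/φ(x))`,
with values in `[0, ∞]`. -/
noncomputable def Dinf (p : ℝ → ℝ) : ENNReal :=
  essSup (fun x => ENNReal.ofReal (Real.log (p x / stdGauss x))) volume

/-- The normalized sum `Z_n = (X₁ + ⋯ + X_n)/√n`. -/
noncomputable def normSum {Ω : Type*} (X : ℕ → Ω → ℝ) (n : ℕ) (ω : Ω) : ℝ :=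
  (∑ k ∈ Finset.range n, X k ω) / Real.sqrt n

open scoped ENNReal

/-!
The law of `X₀` has density `q ≤ M φ`, and `φ(v) ≤ (2π)^{-1/2} e^{t²/2} e^{-tv}` for every `t`,
so the law of `X₀` is dominated by a multiple of the measure `e^{-ts} ds`. Convolution with any
law `ν` maps this measure to `(∫ e^{tu} dν(u)) · e^{-ts} ds`, since `e^{-ts}` is a character.
Taking `ν` the law of `X₁ + ⋯ + X_{n-1}`, independent of `X₀`, gives the factor `L(t)^{n-1}`,
`L` the mgf; rescaling by `√n`, the density of `Z_n` satisfies
`p_n(x) ≤ M √n ρ(t)^{n-1} e^{(√n t - x)²/2} φ(x)` with `ρ(t) = e^{-t²/2} L(t)`.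
For `|x| ≥ τ₀ √n` take `t` within `1/√n` of `x/√n`; then `|t| ≥ τ₀/2`, the separation condition
gives `ρ(t) ≤ δ₀ < 1`, and `√n δ₀^{n-1} = O(δ₀^{n/2})`.
-/

theorem stdGauss_pos (x : ℝ) : 0 < stdGauss x := by
  unfold stdGauss
  positivity

theorem stdGauss_le_exp_tilt (t v : ℝ) :
    stdGauss v ≤ (√(2 * π))⁻¹ * exp (t ^ 2 / 2) * exp (-(t * v)) := by
  rw [stdGauss, mul_assoc, ← exp_add]
  gcongr
  nlinarith [sq_nonneg (v - t)]

theorem ae_le_mul_stdGauss_of_Tinf_ne_top {q : ℝ → ℝ} (hq : Tinf q ≠ ⊤) :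
    ∀ᵐ v, q v ≤ ((Tinf q).toReal + 1) * stdGauss v := by
  filter_upwards [ENNReal.ae_le_essSup fun v => ENNReal.ofReal ((q v - stdGauss v) / stdGauss v)]
    with v (hv : _ ≤ Tinf q)
  rw [← ENNReal.ofReal_toReal hq, ENNReal.ofReal_le_ofReal_iff ENNReal.toReal_nonneg,
    div_le_iff₀ (stdGauss_pos v)] at hv
  linarith

theorem MeasureTheory.Measure.conv_mono_right {M : Type*} [AddMonoid M] [MeasurableSpace M]
    [MeasurableAdd₂ M] (ν : Measure M) {μ₁ μ₂ : Measure M} [SFinite μ₂] (h : μ₁ ≤ μ₂) :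
    ν ∗ μ₁ ≤ ν ∗ μ₂ :=
  Measure.map_mono (Measure.prod_mono le_rfl h) measurable_add

theorem ae_le_of_withDensity_le {α : Type*} [MeasurableSpace α] {μ : Measure α} [SigmaFinite μ]
    {f g : α → ℝ≥0∞} (hf : AEMeasurable f μ) (h : μ.withDensity f ≤ μ.withDensity g) :
    f ≤ᵐ[μ] g :=
  ae_le_of_forall_setLIntegral_le_of_sigmaFinite₀ hf fun s hs _ => by
    simpa only [withDensity_apply _ hs] using h s

noncomputable def expVolume (t : ℝ) : Measure ℝ :=
  volume.withDensity fun s => ENNReal.ofReal (exp (-(t * s)))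

instance (t : ℝ) : SFinite (expVolume t) := by
  unfold expVolume
  infer_instance

theorem conv_expVolume (ν : Measure ℝ) [SFinite ν] (t : ℝ) :
    ν ∗ expVolume t = (∫⁻ u, ENNReal.ofReal (exp (t * u)) ∂ν) • expVolume t := by
  refine Measure.ext_of_lintegral _ fun φ hφ => ?_
  rw [expVolume, Measure.lintegral_conv hφ, lintegral_smul_measure, smul_eq_mul,
    lintegral_withDensity_eq_lintegral_mul _ (by fun_prop) hφ, ← lintegral_mul_const _ (by fun_prop)]
  refine lintegral_congr fun u => ?_
  rw [lintegral_withDensity_eq_lintegral_mul _ (by fun_prop) (by fun_prop)]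
  conv_rhs => rw [← lintegral_add_left_eq_self _ u, ← lintegral_const_mul _ (by fun_prop)]
  refine lintegral_congr fun v => ?_
  simp only [Pi.mul_apply]
  rw [← mul_assoc, ← ENNReal.ofReal_mul (exp_pos _).le, ← exp_add]
  congr 3
  ring

theorem map_div_expVolume {a : ℝ} (ha : 0 < a) (t : ℝ) :
    (expVolume t).map (· / a) = ENNReal.ofReal a • expVolume (a * t) := by
  have hdiv : Measurable fun s : ℝ => s / a := by fun_prop
  ext B hB
  rw [Measure.map_apply hdiv hB, Measure.smul_apply, smul_eq_mul, expVolume, expVolume,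
    withDensity_apply _ (hdiv hB), withDensity_apply _ hB, ← lintegral_indicator (hdiv hB),
    ← lintegral_indicator hB]
  conv_lhs => rw [← Real.smul_map_volume_mul_left ha.ne', abs_of_pos ha, lintegral_smul_measure,
    lintegral_map ((by fun_prop : Measurable fun s : ℝ => ENNReal.ofReal (exp (-(t * s)))).indicator
      (hdiv hB)) (by fun_prop)]
  congr 2
  ext x
  have hmem : a * x ∈ (· / a) ⁻¹' B ↔ x ∈ B := by simp [ha.ne']
  by_cases hx : x ∈ B <;> simp [hmem, hx, mul_assoc, mul_left_comm t a]

theorem withDensity_le_smul_expVolume {q : ℝ → ℝ} {M : ℝ} (hM : 0 ≤ M)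
    (hq : ∀ᵐ v, q v ≤ M * stdGauss v) (t : ℝ) :
    volume.withDensity (fun v => ENNReal.ofReal (q v)) ≤
      ENNReal.ofReal (M * (√(2 * π))⁻¹ * exp (t ^ 2 / 2)) • expVolume t := by
  rw [expVolume, ← withDensity_smul' _ _ ENNReal.ofReal_ne_top]
  refine withDensity_mono ?_
  filter_upwards [hq] with v hv
  rw [Pi.smul_apply, smul_eq_mul, ← ENNReal.ofReal_mul' (exp_pos _).le]
  refine ENNReal.ofReal_le_ofReal (hv.trans ?_)
  rw [mul_assoc M, mul_assoc M]
  exact mul_le_mul_of_nonneg_left (stdGauss_le_exp_tilt t v) hM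

theorem map_add_le_smul_expVolume {Ω : Type*} [MeasurableSpace Ω] {μ : Measure Ω}
    [IsFiniteMeasure μ] {R Y : Ω → ℝ} (hR : AEMeasurable R μ) (hY : AEMeasurable Y μ)
    (hRY : IndepFun R Y μ) {c : ℝ≥0∞} {t : ℝ} (hYle : μ.map Y ≤ c • expVolume t) :
    μ.map (R + Y) ≤ ((∫⁻ ω, ENNReal.ofReal (exp (t * R ω)) ∂μ) * c) • expVolume t := by
  rw [hRY.map_add_eq_map_conv_map₀ hR hY, mul_comm, ← smul_smul,
    ← lintegral_map' (f := fun u => ENNReal.ofReal (exp (t * u))) (by fun_prop) hR,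
    ← conv_expVolume, ← Measure.conv_smul_right]
  exact Measure.conv_mono_right _ hYle

theorem lintegral_exp_mul_sum_of_identDistrib {Ω ι : Type*} [MeasurableSpace Ω] {μ : Measure Ω}
    {X : ι → Ω → ℝ} {i₀ : ι} (hindep : iIndepFun X μ)
    (hident : ∀ i, IdentDistrib (X i) (X i₀) μ μ) {t : ℝ}
    (hint : Integrable (fun ω => exp (t * X i₀ ω)) μ) (s : Finset ι) :
    ∫⁻ ω, ENNReal.ofReal (exp (t * (∑ i ∈ s, X i) ω)) ∂μ =
      ENNReal.ofReal (mgf (X i₀) μ t ^ s.card) := by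
  have : IsProbabilityMeasure μ := hindep.isProbabilityMeasure
  have hmgf : mgf (∑ i ∈ s, X i) μ t = mgf (X i₀) μ t ^ s.card := by
    rw [hindep.mgf_sum₀ fun i => (hident i).aemeasurable_fst]
    exact Finset.prod_eq_pow_card fun i _ => mgf_congr_of_identDistrib _ _ (hident i) t
  -- the mgf of the sum is positive, hence the integral defining it is not a junk value
  have hint_sum : Integrable (fun ω => exp (t * (∑ i ∈ s, X i) ω)) μ :=
    .of_integral_ne_zero <| by
      rw [← mgf, hmgf]
      exact (pow_pos (mgf_pos hint) s.card).ne'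
  rw [← ofReal_integral_eq_lintegral_ofReal hint_sum (ae_of_all _ fun _ => (exp_pos _).le), ← hmgf,
    mgf]

theorem map_normSum_le_smul_expVolume {Ω : Type*} [MeasurableSpace Ω] {μ : Measure Ω}
    {X : ℕ → Ω → ℝ} (hindep : iIndepFun X μ) (hident : ∀ k, IdentDistrib (X k) (X 0) μ μ)
    {q : ℝ → ℝ} (hq : HasDensityOn μ (X 0) q) {M : ℝ} (hM : 0 ≤ M)
    (hqM : ∀ᵐ v, q v ≤ M * stdGauss v) {n : ℕ} (hn : 1 ≤ n) {t : ℝ}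
    (hint : Integrable (fun ω => exp (t * X 0 ω)) μ) :
    μ.map (normSum X n) ≤ (ENNReal.ofReal (mgf (X 0) μ t ^ (n - 1)) *
      ENNReal.ofReal (M * (√(2 * π))⁻¹ * exp (t ^ 2 / 2)) * ENNReal.ofReal √n) •
        expVolume (√n * t) := by
  have : IsProbabilityMeasure μ := hindep.isProbabilityMeasure
  have hmeas : ∀ k, AEMeasurable (X k) μ := fun k => (hident k).aemeasurable_fst
  set R := ∑ k ∈ (Finset.range n).erase 0, X k
  have h0 : 0 ∈ Finset.range n := Finset.mem_range.2 hn
  have hsplit : normSum X n = (· / √n) ∘ (R + X 0) := by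
    ext ω
    simp only [normSum, Function.comp_apply, R, Finset.sum_apply,
      Finset.sum_erase_add _ _ h0]
  have hR : AEMeasurable R μ := Finset.aemeasurable_sum _ fun k _ => hmeas k
  have hlaw : μ.map (R + X 0) ≤ (ENNReal.ofReal (mgf (X 0) μ t ^ (n - 1)) *
      ENNReal.ofReal (M * (√(2 * π))⁻¹ * exp (t ^ 2 / 2))) • expVolume t := by
    have h := map_add_le_smul_expVolume hR (hmeas 0)
      (hindep.indepFun_finsetSum_of_notMem₀ hmeas (Finset.notMem_erase 0 _))
      (hq.2.2.2 ▸ withDensity_le_smul_expVolume hM hqM t)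
    rwa [lintegral_exp_mul_sum_of_identDistrib hindep hident hint, Finset.card_erase_of_mem h0,
      Finset.card_range] at h
  rw [hsplit, ← AEMeasurable.map_map_of_aemeasurable (by fun_prop) (hR.add (hmeas 0))]
  refine (Measure.map_mono hlaw (by fun_prop)).trans_eq ?_
  rw [Measure.map_smul, map_div_expVolume (sqrt_pos.2 (by positivity)), smul_smul]

theorem exp_tilt_eq {a : ℝ} {m : ℕ} (ha : a ^ 2 = m + 1) (L M t x : ℝ) :
    L ^ m * (M * (√(2 * π))⁻¹ * exp (t ^ 2 / 2)) * a * exp (-(a * t * x)) =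
      M * a * (exp (-t ^ 2 / 2) * L) ^ m * exp ((a * t - x) ^ 2 / 2) * stdGauss x := by
  have hexp : exp (t ^ 2 / 2) * exp (-(a * t * x)) =
      exp (-t ^ 2 / 2) ^ m * exp ((a * t - x) ^ 2 / 2) * exp (-x ^ 2 / 2) := by
    rw [← exp_nat_mul, ← exp_add, ← exp_add, ← exp_add]
    congr 1
    linear_combination (-t ^ 2 / 2) * ha
  rw [stdGauss, mul_pow]
  linear_combination (L ^ m * M * (√(2 * π))⁻¹ * a) * hexp

theorem ae_density_normSum_le {Ω : Type*} [MeasurableSpace Ω] {μ : Measure Ω}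
    {X : ℕ → Ω → ℝ} (hindep : iIndepFun X μ) (hident : ∀ k, IdentDistrib (X k) (X 0) μ μ)
    {q : ℝ → ℝ} (hq : HasDensityOn μ (X 0) q) {M : ℝ} (hM : 0 ≤ M)
    (hqM : ∀ᵐ v, q v ≤ M * stdGauss v) {n : ℕ} (hn : 1 ≤ n) {p : ℝ → ℝ}
    (hp : HasDensityOn μ (normSum X n) p) {t : ℝ}
    (hint : Integrable (fun ω => exp (t * X 0 ω)) μ) :
    ∀ᵐ x, p x ≤ M * √n * (exp (-t ^ 2 / 2) * mgf (X 0) μ t) ^ (n - 1) *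
      exp ((√n * t - x) ^ 2 / 2) * stdGauss x := by
  have hle := map_normSum_le_smul_expVolume hindep hident hq hM hqM hn hint
  rw [hp.2.2.2, expVolume, ← withDensity_smul' _ _ (by finiteness)] at hle
  filter_upwards [ae_le_of_withDensity_le hp.2.1.ennreal_ofReal.aemeasurable hle] with x hx
  have hC : 0 ≤ M * (√(2 * π))⁻¹ * exp (t ^ 2 / 2) := by positivity
  rw [Pi.smul_apply, smul_eq_mul, ← ENNReal.ofReal_mul' hC, ← ENNReal.ofReal_mul' (sqrt_nonneg _),
    ← ENNReal.ofReal_mul' (exp_pos _).le, ENNReal.ofReal_le_ofReal_iff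
      (by have := pow_nonneg (mgf_nonneg (X := X 0) (μ := μ) (t := t)) (n - 1); positivity)] at hx
  refine hx.trans_eq (exp_tilt_eq ?_ _ _ _ _)
  rw [sq_sqrt (Nat.cast_nonneg n), Nat.cast_sub hn, Nat.cast_one, sub_add_cancel]

theorem ae_le_of_forall_ae_le_tilt {f ρ : ℝ → ℝ} {K δ₀ τ₀ a : ℝ} {m : ℕ} (hK : 0 ≤ K)
    (hτ₀ : 0 < τ₀) (ha : 0 < a) (hρ₀ : ∀ t, 0 ≤ ρ t) (hρ : ∀ t, τ₀ / 2 ≤ |t| → ρ t ≤ δ₀)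
    (hf : ∀ t, ∀ᵐ x, f x ≤ K * ρ t ^ m * exp ((a * t - x) ^ 2 / 2) * stdGauss x) :
    ∀ᵐ x, τ₀ * a ≤ |x| → f x ≤ K * δ₀ ^ m * exp (1 / 2) * stdGauss x := by
  -- each tilted bound holds off a null set depending on `t`: use only the countably many rational `t`
  filter_upwards [ae_all_iff.2 fun r : ℚ => hf r] with x hx hxτ
  set ε := min (τ₀ / 2) a⁻¹
  have hε : 0 < ε := lt_min (by positivity) (by positivity)
  obtain ⟨r, hr⟩ : ∃ r : ℚ, |(r : ℝ) - x / a| < ε := by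
    obtain ⟨r, hr_lo, hr_hi⟩ := exists_rat_btwn (show x / a - ε < x / a + ε by linarith)
    exact ⟨r, abs_sub_lt_iff.2 ⟨by linarith, by linarith⟩⟩
  have hr_far : τ₀ / 2 ≤ |(r : ℝ)| := by
    have : τ₀ ≤ |x / a| := by rwa [abs_div, abs_of_pos ha, le_div_iff₀ ha]
    linarith [abs_sub_abs_le_abs_sub (x / a) r, abs_sub_comm (r : ℝ) (x / a),
      min_le_left (τ₀ / 2) a⁻¹]
  have hr_near : (a * r - x) ^ 2 / 2 ≤ 1 / 2 := by
    have : |a * r - x| ≤ 1 := by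
      rw [show a * r - x = a * (r - x / a) by field_simp, abs_mul, abs_of_pos ha]
      calc a * |(r : ℝ) - x / a| ≤ a * a⁻¹ := by gcongr; exact hr.le.trans (min_le_right _ _)
        _ = 1 := mul_inv_cancel₀ ha.ne'
    linarith [(sq_le_one_iff_abs_le_one _).2 this]
  calc f x ≤ K * ρ r ^ m * exp ((a * r - x) ^ 2 / 2) * stdGauss x := hx r
    _ ≤ K * δ₀ ^ m * exp (1 / 2) * stdGauss x := by
      have hρr := hρ r hr_far
      have := stdGauss_pos x
      gcongr
      · exact mul_nonneg hK (pow_nonneg ((hρ₀ r).trans hρr) m)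
      · exact hρ₀ r

theorem sqrt_mul_pow_le {δ : ℝ} (h0 : 0 ≤ δ) (h1 : δ < 1) (n : ℕ) :
    √n * δ ^ n ≤ δ / (1 - δ) ^ 2 := by
  have hsum := hasSum_coe_mul_geometric_of_norm_lt_one (by rwa [norm_of_nonneg h0])
  refine le_trans ?_ (le_hasSum hsum n fun k _ => by positivity)
  gcongr
  rcases n.eq_zero_or_pos with rfl | hn
  · simp
  · exact sqrt_le_self_iff.2 (Or.inr (by exact_mod_cast hn))

theorem exists_sqrt_mul_pow_pred_le {δ₀ : ℝ} (h0 : 0 < δ₀) (h1 : δ₀ < 1) :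
    ∃ C, 0 < C ∧ ∃ δ, 0 < δ ∧ δ < 1 ∧ ∀ n : ℕ, √n * δ₀ ^ (n - 1) ≤ C * δ ^ n := by
  obtain ⟨δ, hδ0, rfl⟩ : ∃ δ, 0 < δ ∧ δ ^ 2 = δ₀ := ⟨√δ₀, sqrt_pos.2 h0, sq_sqrt h0.le⟩
  have hδ1 : δ < 1 := by nlinarith
  have hC : 0 < δ / (1 - δ) ^ 2 / δ ^ 2 := by
    have : 0 < 1 - δ := by linarith
    positivity
  refine ⟨_, hC, δ, hδ0, hδ1, fun n => ?_⟩
  rcases n with _ | n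
  · simpa using hC.le
  calc √(n + 1 : ℕ) * (δ ^ 2) ^ (n + 1 - 1)
      = √(n + 1 : ℕ) * δ ^ (n + 1) * δ ^ (n + 1) / δ ^ 2 := by
        rw [Nat.add_sub_cancel, ← pow_mul]
        field_simp
        ring
    _ ≤ δ / (1 - δ) ^ 2 * δ ^ (n + 1) / δ ^ 2 := by
        gcongr
        exact sqrt_mul_pow_le hδ0.le hδ1 _
    _ = δ / (1 - δ) ^ 2 / δ ^ 2 * δ ^ (n + 1) := by ring

theorem renyi_clt_stmt_10_general
    {Ω : Type*} [MeasurableSpace Ω] (μ : Measure Ω) [IsProbabilityMeasure μ]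
    (X : ℕ → Ω → ℝ)
    (hindep : iIndepFun X μ)
    (hident : ∀ k, IdentDistrib (X k) (X 0) μ μ)
    (hint : ∀ t : ℝ, Integrable (fun ω => Real.exp (t * X 0 ω)) μ)
    (hsep : ∀ t₀ : ℝ, 0 < t₀ → ∃ δ : ℝ, δ < 1 ∧
      ∀ t : ℝ, t₀ ≤ |t| → Real.exp (-t ^ 2 / 2) * mgf (X 0) μ t ≤ δ)
    (q : ℝ → ℝ) (hq : HasDensityOn μ (X 0) q) (hfin : Tinf q ≠ ⊤)
    (p : ℕ → ℝ → ℝ)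
    (hdens : ∀ n : ℕ, 1 ≤ n → HasDensityOn μ (normSum X n) (p n)) :
    ∀ τ₀ : ℝ, 0 < τ₀ →
      ∃ A : ℝ, 0 < A ∧ ∃ δ : ℝ, 0 < δ ∧ δ < 1 ∧
        ∀ n : ℕ, 1 ≤ n →
          ∀ᵐ x : ℝ, τ₀ * Real.sqrt n ≤ |x| →
            p n x ≤ A * δ ^ n * stdGauss x := by
  intro τ₀ hτ₀
  set M := (Tinf q).toReal + 1
  have hM : 0 < M := by positivity
  obtain ⟨δ₁, hδ₁, hsep₁⟩ := hsep (τ₀ / 2) (by positivity)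
  set δ₀ := max δ₁ (1 / 2)
  obtain ⟨C, hC, δ, hδ0, hδ1, hgrow⟩ :=
    exists_sqrt_mul_pow_pred_le (δ₀ := δ₀) (by positivity) (max_lt hδ₁ (by norm_num))
  refine ⟨M * exp (1 / 2) * C, by positivity, δ, hδ0, hδ1, fun n hn => ?_⟩
  have hn₀ : (0 : ℝ) < n := by exact_mod_cast hn
  filter_upwards [ae_le_of_forall_ae_le_tilt (by positivity) hτ₀ (sqrt_pos.2 hn₀)
    (fun t => mul_nonneg (exp_pos _).le mgf_nonneg)
    (fun t ht => (hsep₁ t ht).trans (le_max_left _ _))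
    fun t => ae_density_normSum_le hindep hident hq hM.le
      (ae_le_mul_stdGauss_of_Tinf_ne_top hfin) hn (hdens n hn) (hint t)] with x hx hxτ
  calc p n x ≤ M * √n * δ₀ ^ (n - 1) * exp (1 / 2) * stdGauss x := hx hxτ
    _ = M * exp (1 / 2) * (√n * δ₀ ^ (n - 1)) * stdGauss x := by ring
    _ ≤ M * exp (1 / 2) * (C * δ ^ n) * stdGauss x :=
        mul_le_mul_of_nonneg_right (mul_le_mul_of_nonneg_left (hgrow n) (by positivity))
          (stdGauss_pos x).le
    _ = M * exp (1 / 2) * C * δ ^ n * stdGauss x := by ring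

/-- Corollary 4.3: if `X` has mean zero, variance one, a density `p` with
`T_∞(p‖φ) < ∞`, and satisfies the separation condition, then for every `τ₀ > 0` there are
`A > 0` and `δ ∈ (0,1)` such that the densities `p_n` of `Z_n` satisfy
`p_n(x) ≤ A δⁿ φ(x)` for a.e. `x` with `|x| ≥ τ₀√n`. -/
theorem renyi_clt_stmt_10
    {Ω : Type*} [MeasurableSpace Ω] (μ : Measure Ω) [IsProbabilityMeasure μ]
    (X : ℕ → Ω → ℝ)
    (hindep : iIndepFun X μ)
    (hident : ∀ k, IdentDistrib (X k) (X 0) μ μ)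
    (hmean : ∫ ω, X 0 ω ∂μ = 0) (hvar : variance (X 0) μ = 1)
    (hint : ∀ t : ℝ, Integrable (fun ω => Real.exp (t * X 0 ω)) μ)
    (hsep : ∀ t₀ : ℝ, 0 < t₀ → ∃ δ : ℝ, δ < 1 ∧
      ∀ t : ℝ, t₀ ≤ |t| → Real.exp (-t ^ 2 / 2) * mgf (X 0) μ t ≤ δ)
    (q : ℝ → ℝ) (hq : HasDensityOn μ (X 0) q) (hfin : Tinf q ≠ ⊤)
    (p : ℕ → ℝ → ℝ)
    (hdens : ∀ n : ℕ, 1 ≤ n → HasDensityOn μ (normSum X n) (p n)) :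
    ∀ τ₀ : ℝ, 0 < τ₀ →
      ∃ A : ℝ, 0 < A ∧ ∃ δ : ℝ, 0 < δ ∧ δ < 1 ∧
        ∀ n : ℕ, 1 ≤ n →
          ∀ᵐ x : ℝ, τ₀ * Real.sqrt n ≤ |x| →
            p n x ≤ A * δ ^ n * stdGauss x :=
  renyi_clt_stmt_10_general μ X hindep hident hint hsep q hq hfin p hdens
end

section
/- Let X be a random variable with density p satisfying p(x) ≤ c φ(x) for almost every x, where c = 1 + T_∞(p‖φ) < ∞. Then for every h ∈ ℝ, the variance of the Esscher-tilted distribution satisfies σ_h = √(K''(h)) ≥ √(π/(6c²)) · e^{−A(h)}, where K(h) = log E[e^{hX}] and A(h) = h²/2 − K(h). -/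
open MeasureTheory ProbabilityTheory Filter Real

/-!
`K''(h)` is the variance of the tilted law, whose density `e^{hx} p(x) / L(h)` is bounded by
`β = c e^{h²/2} / (√(2π) L(h))` because `e^{hx} φ(x) ≤ e^{h²/2} / √(2π)`. A probability density
bounded by `β` has variance at least `1 / (12 β²)`, the value for the uniform density on an
interval of length `1 / β`, and `1 / (12 β²) = π / (6 c²) · e^{-2 A(h)}`.
-/

open scoped ENNReal

lemma stdGauss_eq_gaussianPDFReal : stdGauss = gaussianPDFReal 0 1 := by
  ext x
  simp [stdGauss, gaussianPDFReal]

lemma withDensity_le_smul_gaussianReal {p : ℝ → ℝ} {c : ℝ}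
    (hdom : ∀ᵐ x : ℝ, p x ≤ c * stdGauss x) :
    volume.withDensity (fun x => ENNReal.ofReal (p x)) ≤ ENNReal.ofReal c • gaussianReal 0 1 := by
  rw [gaussianReal_of_var_ne_zero 0 one_ne_zero, ← withDensity_smul' _ _ ENNReal.ofReal_ne_top]
  refine withDensity_mono ?_
  filter_upwards [hdom] with x hx
  rw [Pi.smul_apply, smul_eq_mul, gaussianPDF, ← stdGauss_eq_gaussianPDFReal,
    ← ENNReal.ofReal_mul' (by unfold stdGauss; positivity)]
  exact ENNReal.ofReal_le_ofReal hx

lemma integrableExpSet_id_eq_univ_of_le_smul_gaussianReal {ν : Measure ℝ} {a : ℝ≥0∞}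
    (ha : a ≠ ∞) (hν : ν ≤ a • gaussianReal 0 1) : integrableExpSet id ν = Set.univ :=
  Set.eq_univ_of_forall fun t =>
    ((integrable_exp_mul_gaussianReal t).smul_measure ha).mono_measure hν

lemma exp_mul_mul_stdGauss_le (h x : ℝ) :
    Real.exp (h * x) * stdGauss x ≤ Real.exp (h ^ 2 / 2) / Real.sqrt (2 * Real.pi) := by
  have hexp : Real.exp (h * x) * Real.exp (-x ^ 2 / 2) ≤ Real.exp (h ^ 2 / 2) := by
    rw [← Real.exp_add]
    exact Real.exp_le_exp.mpr (by nlinarith [sq_nonneg (x - h)])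
  calc Real.exp (h * x) * stdGauss x
        = (Real.sqrt (2 * Real.pi))⁻¹ * (Real.exp (h * x) * Real.exp (-x ^ 2 / 2)) := by
          unfold stdGauss; ring
    _ ≤ (Real.sqrt (2 * Real.pi))⁻¹ * Real.exp (h ^ 2 / 2) := by gcongr
    _ = Real.exp (h ^ 2 / 2) / Real.sqrt (2 * Real.pi) := inv_mul_eq_div _ _

lemma tilted_withDensity_le_smul_volume {p : ℝ → ℝ} {c : ℝ} (hpm : Measurable p)
    (hp0 : ∀ x, 0 ≤ p x) (hdom : ∀ᵐ x : ℝ, p x ≤ c * stdGauss x) (h : ℝ) :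
    (volume.withDensity (fun x => ENNReal.ofReal (p x))).tilted (h * ·) ≤
      ENNReal.ofReal (c * Real.exp (h ^ 2 / 2) / (Real.sqrt (2 * Real.pi) *
        mgf id (volume.withDensity (fun x => ENNReal.ofReal (p x))) h)) • volume := by
  set L := mgf id (volume.withDensity (fun x => ENNReal.ofReal (p x))) h
  have hL : 0 ≤ L := mgf_nonneg
  rw [Measure.tilted, ← withDensity_mul _ hpm.ennreal_ofReal (by fun_prop), ← withDensity_const]
  refine withDensity_mono ?_
  filter_upwards [hdom] with x hx
  have hc : 0 ≤ c := by
    have : 0 < stdGauss x := by unfold stdGauss; positivity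
    nlinarith [hp0 x]
  rw [Pi.mul_apply, ← ENNReal.ofReal_mul (hp0 x)]
  refine ENNReal.ofReal_le_ofReal ?_
  calc p x * (Real.exp (h * x) / L) ≤ c * stdGauss x * (Real.exp (h * x) / L) := by gcongr
    _ = c * (Real.exp (h * x) * stdGauss x) / L := by ring
    _ ≤ c * (Real.exp (h ^ 2 / 2) / Real.sqrt (2 * Real.pi)) / L := by
        gcongr; exact exp_mul_mul_stdGauss_le h x
    _ = c * Real.exp (h ^ 2 / 2) / (Real.sqrt (2 * Real.pi) * L) := by ring

lemma integral_indicator_Icc_sq_sub_sq (m : ℝ) {r : ℝ} (hr : 0 ≤ r) :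
    ∫ x, (Set.Icc (m - r) (m + r)).indicator (fun x => r ^ 2 - (x - m) ^ 2) x = 4 * r ^ 3 / 3 := by
  rw [integral_indicator measurableSet_Icc, integral_Icc_eq_integral_Ioc,
    ← intervalIntegral.integral_of_le (by linarith),
    intervalIntegral.integral_comp_sub_right (fun y => r ^ 2 - y ^ 2) m,
    intervalIntegral.integral_sub intervalIntegrable_const
      ((continuous_pow 2).intervalIntegrable _ _),
    intervalIntegral.integral_const, integral_pow, smul_eq_mul]
  ring

lemma one_div_le_integral_sq_sub_of_le_smul_volume {ν : Measure ℝ} [IsProbabilityMeasure ν]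
    {β : ℝ} (hν : ν ≤ ENNReal.ofReal β • volume) (m : ℝ)
    (hint : Integrable (fun x => (x - m) ^ 2) ν) :
    1 / (12 * β ^ 2) ≤ ∫ x, (x - m) ^ 2 ∂ν := by
  have hβ : 0 < β := by
    by_contra! hβ
    have h0 : ν Set.univ ≤ 0 := by
      simpa [ENNReal.ofReal_eq_zero.mpr hβ] using hν Set.univ
    simp at h0
  -- `(x - m)² ≥ r² - (r² - (x - m)²)⁺`, and the positive part has `ν`-integral at most
  -- `β · 4r³/3`; the choice `r = 1 / (2β)` optimizes the resulting bound.
  set r := 1 / (2 * β)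
  set f := (Set.Icc (m - r) (m + r)).indicator (fun x => r ^ 2 - (x - m) ^ 2)
  have hf_vol : Integrable f ((ENNReal.ofReal β) • volume) :=
    ((integrable_indicator_iff measurableSet_Icc).2
      (by fun_prop : Continuous fun x : ℝ => r ^ 2 - (x - m) ^ 2).integrableOn_Icc).smul_measure
      ENNReal.ofReal_ne_top
  have hf_ν : Integrable f ν := hf_vol.mono_measure hν
  have hf_bounds : ∀ x, 0 ≤ f x ∧ r ^ 2 - f x ≤ (x - m) ^ 2 := by
    intro x
    have hr : 0 ≤ r := by positivity
    by_cases hx : x ∈ Set.Icc (m - r) (m + r)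
    · simp only [f, Set.indicator_of_mem hx]
      obtain ⟨h1, h2⟩ := hx
      constructor <;> nlinarith
    · simp only [f, Set.indicator_of_notMem hx]
      rw [Set.mem_Icc, not_and_or, not_le, not_le] at hx
      constructor
      · rfl
      · rcases hx with hx | hx <;> nlinarith
  have hf_int : ∫ x, f x ∂ν ≤ β * (4 * r ^ 3 / 3) :=
    calc ∫ x, f x ∂ν ≤ ∫ x, f x ∂((ENNReal.ofReal β) • volume) :=
          integral_mono_measure hν (Eventually.of_forall fun x => (hf_bounds x).1) hf_vol
      _ = β * (4 * r ^ 3 / 3) := by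
          rw [integral_smul_measure, ENNReal.toReal_ofReal hβ.le, smul_eq_mul,
            integral_indicator_Icc_sq_sub_sq m (by positivity)]
  calc 1 / (12 * β ^ 2) = r ^ 2 - β * (4 * r ^ 3 / 3) := by
        simp only [r]; field_simp; ring
    _ ≤ r ^ 2 - ∫ x, f x ∂ν := by linarith
    _ = ∫ x, (r ^ 2 - f x) ∂ν := by
        rw [integral_sub (integrable_const _) hf_ν]
        simp
    _ ≤ ∫ x, (x - m) ^ 2 ∂ν :=
        integral_mono ((integrable_const _).sub hf_ν) hint fun x => (hf_bounds x).2

lemma one_div_le_variance_id_of_le_smul_volume {ν : Measure ℝ} [IsProbabilityMeasure ν]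
    {β : ℝ} (hν : ν ≤ ENNReal.ofReal β • volume) (hmem : MemLp id 2 ν) :
    1 / (12 * β ^ 2) ≤ Var[id; ν] := by
  rw [variance_eq_integral measurable_id.aemeasurable]
  exact one_div_le_integral_sq_sub_of_le_smul_volume hν _ (hmem.sub (memLp_const _)).integrable_sq

lemma deriv_deriv_cgf_eq_variance_tilted {Ω : Type*} [MeasurableSpace Ω] {μ : Measure Ω}
    {X : Ω → ℝ} {h : ℝ} (hh : h ∈ interior (integrableExpSet X μ)) :
    deriv (deriv (cgf X μ)) h = Var[X; μ.tilted (h * X ·)] := by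
  rw [variance_tilted_mul hh, iteratedDeriv_succ, iteratedDeriv_one]

lemma pi_div_mul_sq_le_variance_tilted {p : ℝ → ℝ} {c : ℝ} (hpm : Measurable p)
    (hp0 : ∀ x, 0 ≤ p x) (hdom : ∀ᵐ x : ℝ, p x ≤ c * stdGauss x)
    [IsProbabilityMeasure (volume.withDensity fun x => ENNReal.ofReal (p x))] (h : ℝ) :
    Real.pi / (6 * c ^ 2) *
        (mgf id (volume.withDensity fun x => ENNReal.ofReal (p x)) h * Real.exp (-(h ^ 2 / 2))) ^ 2
      ≤ Var[id; (volume.withDensity fun x => ENNReal.ofReal (p x)).tilted (h * ·)] := by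
  set ν := volume.withDensity fun x => ENNReal.ofReal (p x)
  have hexp : integrableExpSet id ν = Set.univ :=
    integrableExpSet_id_eq_univ_of_le_smul_gaussianReal ENNReal.ofReal_ne_top
      (withDensity_le_smul_gaussianReal hdom)
  have hint : Integrable (fun x => Real.exp (h * x)) ν :=
    show h ∈ integrableExpSet id ν from hexp ▸ Set.mem_univ h
  have : IsProbabilityMeasure (ν.tilted (h * ·)) := isProbabilityMeasure_tilted hint
  refine le_of_eq_of_le ?_ (one_div_le_variance_id_of_le_smul_volume
    (tilted_withDensity_le_smul_volume hpm hp0 hdom h) (memLp_tilted_mul (by simp [hexp]) 2))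
  rcases eq_or_ne c 0 with rfl | hc
  · simp
  have hL : 0 < mgf id ν h := mgf_pos hint
  rw [Real.exp_neg]
  field_simp
  rw [Real.sq_sqrt (by positivity)]
  ring

theorem renyi_clt_stmt_11_general
    {Ω : Type*} [MeasurableSpace Ω] (μ : Measure Ω) [IsProbabilityMeasure μ]
    (X : Ω → ℝ)
    (p : ℝ → ℝ) (hp : HasDensityOn μ X p)
    (c : ℝ)
    (hdom : ∀ᵐ x : ℝ, p x ≤ c * stdGauss x)
    (K : ℝ → ℝ) (hK : K = fun t => Real.log (mgf X μ t))
    (A : ℝ → ℝ) (hA : A = fun t => t ^ 2 / 2 - K t) :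
    ∀ h : ℝ,
      Real.sqrt (Real.pi / (6 * c ^ 2)) * Real.exp (-A h) ≤
        Real.sqrt (deriv (deriv K) h) := by
  obtain ⟨hXm, hpm, hp0, hmap⟩ := hp
  intro h
  set ν := volume.withDensity fun x => ENNReal.ofReal (p x)
  have : IsProbabilityMeasure ν := hmap ▸ Measure.isProbabilityMeasure_map hXm.aemeasurable
  have hKν : K = cgf id ν := by
    rw [hK, ← hmap]; funext t; rw [cgf, mgf_id_map hXm.aemeasurable]
  have hexp : integrableExpSet id ν = Set.univ :=
    integrableExpSet_id_eq_univ_of_le_smul_gaussianReal ENNReal.ofReal_ne_top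
      (withDensity_le_smul_gaussianReal hdom)
  have hexpA : Real.exp (-A h) = mgf id ν h * Real.exp (-(h ^ 2 / 2)) := by
    rw [hA, hKν, neg_sub, sub_eq_add_neg, Real.exp_add,
      exp_cgf (X := id) (show h ∈ integrableExpSet id ν from hexp ▸ Set.mem_univ h)]
  rw [hKν, deriv_deriv_cgf_eq_variance_tilted (by simp [hexp]), ← Real.sqrt_sq (Real.exp_nonneg _),
    ← Real.sqrt_mul (by positivity), hexpA]
  exact Real.sqrt_le_sqrt (pi_div_mul_sq_le_variance_tilted hpm hp0 hdom h)

/-- Lemma 5.1: if the density `p` of `X` satisfies `p ≤ cφ` a.e. with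
`c = 1 + T_∞(p‖φ) < ∞`, then the standard deviation `σ_h = √(K''(h))` of the Esscher tilt
satisfies `σ_h ≥ √(π/(6c²)) e^{−A(h)}` for every `h`. -/
theorem renyi_clt_stmt_11
    {Ω : Type*} [MeasurableSpace Ω] (μ : Measure Ω) [IsProbabilityMeasure μ]
    (X : Ω → ℝ)
    (p : ℝ → ℝ) (hp : HasDensityOn μ X p)
    (hfin : Tinf p ≠ ⊤) (c : ℝ) (hc : c = 1 + (Tinf p).toReal)
    (hdom : ∀ᵐ x : ℝ, p x ≤ c * stdGauss x)
    (K : ℝ → ℝ) (hK : K = fun t => Real.log (mgf X μ t))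
    (A : ℝ → ℝ) (hA : A = fun t => t ^ 2 / 2 - K t) :
    ∀ h : ℝ,
      Real.sqrt (Real.pi / (6 * c ^ 2)) * Real.exp (-A h) ≤
        Real.sqrt (deriv (deriv K) h) :=
  renyi_clt_stmt_11_general μ X p hp c hdom K hK A hA
end
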